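/- For every ω-regular language L over the alphabet (2^{AP})ⁿ × Σⁿ there is a quantifier-free HyperPDL-Δ formula φ with path variables π₁,…,π_n such that for every trace assignment Π binding π₁,…,π_n: Π ⊨ φ if and only if ν_{AP}(Π) ∈ L. Concretely, writing L = ⋃_{i=1}^{k} L(r_{i,0}) · L(r_{i,1})^ω with regular expressions r_{i,j}, replacing each symbol ((P₁,…,P_n), τ) in r_{i,j} by the program (⋀_{l=1}^{n} (⋀_{a∈P_l} a_{π_l} ∧ ⋀_{a∉P_l} ¬a_{π_l}))? · τ yields programs α_{i,j}, and φ ≡ ⋁_{i=1}^{k} ⟨α_{i,0}⟩ Δα_{i,1} has this property. -/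

import Mathlib

/-- A trace: an infinite alternating sequence of labels (sets of atomic propositions)
and atomic programs; `lab j` is the label at step `j`, `act j` the atomic program
between steps `j` and `j+1`. -/
structure Trace (AP P : Type) where
  lab : ℕ → Set AP
  act : ℕ → P

/-- The suffix of a trace starting after `j` steps. -/
def Trace.drop {AP P : Type} (t : Trace AP P) (j : ℕ) : Trace AP P :=
  ⟨fun m => t.lab (j + m), fun m => t.act (j + m)⟩

/-- The shifted trace assignment. -/
def TAdrop {AP P : Type} {n : ℕ} (Pa : Fin n → Trace AP P) (j : ℕ) : Fin n → Trace AP P :=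
  fun l => (Pa l).drop j

mutual
/-- Quantifier-free HyperPDL-Δ formulas over `n` path variables. -/
inductive QF (AP P : Type) (n : ℕ) : Type
  | atom (a : AP) (l : Fin n) : QF AP P n
  | not (φ : QF AP P n) : QF AP P n
  | and (φ ψ : QF AP P n) : QF AP P n
  | or (φ ψ : QF AP P n) : QF AP P n
  | dia (α : Pg AP P n) (φ : QF AP P n) : QF AP P n
  | box (α : Pg AP P n) (φ : QF AP P n) : QF AP P n
  | delta (α : Pg AP P n) : QF AP P n

/-- Programs of HyperPDL-Δ (with `none` as the wildcard coordinate). -/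
inductive Pg (AP P : Type) (n : ℕ) : Type
  | atom (t : Fin n → Option P) : Pg AP P n
  | eps : Pg AP P n
  | sum (a b : Pg AP P n) : Pg AP P n
  | seq (a b : Pg AP P n) : Pg AP P n
  | star (a : Pg AP P n) : Pg AP P n
  | test (φ : QF AP P n) : Pg AP P n
end

mutual
/-- Satisfaction of a quantifier-free formula by a trace assignment. -/
def QF.Sat {AP P : Type} {n : ℕ} : QF AP P n → (Fin n → Trace AP P) → Prop
  | .atom a l, Pa => a ∈ (Pa l).lab 0
  | .not φ, Pa => ¬ φ.Sat Pa
  | .and φ ψ, Pa => φ.Sat Pa ∧ ψ.Sat Pa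
  | .or φ ψ, Pa => φ.Sat Pa ∨ ψ.Sat Pa
  | .dia α φ, Pa => ∃ j, α.Rel Pa 0 j ∧ φ.Sat (TAdrop Pa j)
  | .box α φ, Pa => ∀ j, α.Rel Pa 0 j → φ.Sat (TAdrop Pa j)
  | .delta α, Pa => ∃ k : ℕ → ℕ, k 0 = 0 ∧ (∀ i, k i ≤ k (i + 1)) ∧
      ∀ i, α.Rel Pa (k i) (k (i + 1))

/-- The relation `(Π, i, k) ∈ R(α)` (indices count steps). -/
def Pg.Rel {AP P : Type} {n : ℕ} : Pg AP P n → (Fin n → Trace AP P) → ℕ → ℕ → Prop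
  | .atom t, Pa, i, k => k = i + 1 ∧ ∀ l, t l = none ∨ t l = some ((Pa l).act i)
  | .eps, _, i, k => i = k
  | .sum a b, Pa, i, k => a.Rel Pa i k ∨ b.Rel Pa i k
  | .seq a b, Pa, i, k => ∃ j, i ≤ j ∧ j ≤ k ∧ a.Rel Pa i j ∧ b.Rel Pa j k
  | .star a, Pa, i, k => ∃ (m : ℕ) (js : Fin (m + 1) → ℕ), js 0 = i ∧ js (Fin.last m) = k ∧
      ∀ l : Fin m, js l.castSucc ≤ js l.succ ∧ a.Rel Pa (js l.castSucc) (js l.succ)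
  | .test φ, Pa, i, k => i = k ∧ φ.Sat (TAdrop Pa i)
end

/-- A nondeterministic Büchi automaton. -/
structure NBA (A : Type) where
  Q : Type
  fin : Fintype Q
  q0 : Q
  δ : Q → A → Set Q
  F : Set Q

/-- The ω-language of an NBA. -/
def NBA.Lang {A : Type} (M : NBA A) : Set (ℕ → A) :=
  {w | ∃ r : ℕ → M.Q, r 0 = M.q0 ∧ (∀ k, r (k + 1) ∈ M.δ (r k) (w k)) ∧
    ∀ N, ∃ k ≥ N, r k ∈ M.F}

/-- The ω-word over `(2^{AP})ⁿ × Σⁿ` induced by a trace assignment, zipping the labels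
and atomic programs of all `n` traces. -/
def nuAP {AP P : Type} {n : ℕ} (Pa : Fin n → Trace AP P) :
    ℕ → (Fin n → Set AP) × (Fin n → P) :=
  fun k => (fun l => (Pa l).lab k, fun l => (Pa l).act k)

/-!
An NBA accepts `w` iff some accepting state `q` is reached from the initial state and then
revisited infinitely often, i.e. iff `w` lies in `⋃_{q ∈ F} L(q₀ → q) · L(q → q)^ω`. The finite-run
languages `L(p → q)` are regular, and the McNaughton–Yamada construction turns them into
programs whose letters are "test the whole label, then take the atomic step". The prefix is then
read by `⟨·⟩` and the infinite repetition of loops at `q` by `Δ`.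
-/

open Filter Relation

section Formulas

variable {AP P : Type} {n : ℕ}

namespace QF

/-- `AP` may be empty, so truth cannot be written as `a ∨ ¬a`; `Δε` holds everywhere. -/
def top : QF AP P n := .delta .eps

theorem sat_top (Pa : Fin n → Trace AP P) : (top : QF AP P n).Sat Pa :=
  ⟨fun _ => 0, rfl, fun _ => le_rfl, fun _ => rfl⟩

def conj (l : List (QF AP P n)) : QF AP P n := l.foldr .and top

def disj (l : List (QF AP P n)) : QF AP P n := l.foldr .or (.not top)

theorem sat_conj (l : List (QF AP P n)) (Pa : Fin n → Trace AP P) :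
    (conj l).Sat Pa ↔ ∀ φ ∈ l, φ.Sat Pa := by
  induction l with
  | nil => simpa [conj] using sat_top Pa
  | cons φ l ih => simp [conj, Sat, ← ih]

theorem sat_disj (l : List (QF AP P n)) (Pa : Fin n → Trace AP P) :
    (disj l).Sat Pa ↔ ∃ φ ∈ l, φ.Sat Pa := by
  induction l with
  | nil => simpa [disj, Sat] using sat_top Pa
  | cons φ l ih => simp [disj, Sat, ← ih]

open Classical in
noncomputable def labelEq [Fintype AP] (S : Fin n → Set AP) : QF AP P n :=
  conj ((List.finRange n).flatMap fun l => Finset.univ.toList.map fun a =>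
    if a ∈ S l then .atom a l else .not (.atom a l))

open Classical in
theorem sat_labelEq [Fintype AP] (S : Fin n → Set AP) (Pa : Fin n → Trace AP P) :
    (labelEq S).Sat Pa ↔ ∀ l, (Pa l).lab 0 = S l := by
  have hlit : ∀ l a, (if a ∈ S l then atom a l else not (atom a l) : QF AP P n).Sat Pa ↔
      (a ∈ (Pa l).lab 0 ↔ a ∈ S l) := by
    intro l a
    split_ifs with h <;> simp [Sat, h]
  rw [labelEq, sat_conj]
  simp only [List.forall_mem_flatMap, List.forall_mem_map, hlit, Finset.mem_toList,
    Finset.mem_univ, List.mem_finRange, forall_const, Set.ext_iff]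

end QF

abbrev Letter (AP P : Type) (n : ℕ) := (Fin n → Set AP) × (Fin n → P)

namespace Pg

def choice (l : List (Pg AP P n)) : Pg AP P n := l.foldr .sum (.test (.not .top))

theorem rel_choice (l : List (Pg AP P n)) (Pa : Fin n → Trace AP P) (i k : ℕ) :
    (choice l).Rel Pa i k ↔ ∃ α ∈ l, α.Rel Pa i k := by
  induction l with
  | nil => simpa [choice, Rel, QF.Sat] using fun _ => QF.sat_top _
  | cons α l ih => simp [choice, Rel, ← ih]

noncomputable def letter [Fintype AP] (x : Letter AP P n) : Pg AP P n :=
  .seq (.test (QF.labelEq x.1)) (.atom fun l => some (x.2 l))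

theorem rel_letter [Fintype AP] (x : Letter AP P n) (Pa : Fin n → Trace AP P) (i k : ℕ) :
    (letter x).Rel Pa i k ↔ k = i + 1 ∧ nuAP Pa i = x := by
  simp only [letter, Rel, QF.sat_labelEq]
  constructor
  · rintro ⟨j, -, -, ⟨rfl, hlab⟩, rfl, hact⟩
    refine ⟨rfl, Prod.ext (funext hlab) (funext fun l => ?_)⟩
    simpa [eq_comm, nuAP] using hact l
  · rintro ⟨rfl, rfl⟩
    exact ⟨i, le_rfl, Nat.le_succ i, ⟨rfl, fun l => rfl⟩, rfl, fun l => Or.inr rfl⟩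

noncomputable def letterIn [Fintype AP] (X : Finset (Letter AP P n)) : Pg AP P n :=
  choice (X.toList.map letter)

theorem rel_letterIn [Fintype AP] (X : Finset (Letter AP P n)) (Pa : Fin n → Trace AP P)
    (i k : ℕ) : (letterIn X).Rel Pa i k ↔ k = i + 1 ∧ nuAP Pa i ∈ X := by
  simp only [letterIn, rel_choice, List.mem_map, Finset.mem_toList, exists_exists_and_eq_and,
    rel_letter]
  constructor
  · rintro ⟨x, hx, rfl, rfl⟩
    exact ⟨rfl, hx⟩
  · rintro ⟨rfl, hx⟩
    exact ⟨_, hx, rfl, rfl⟩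

theorem rel_star_iff (α : Pg AP P n) (Pa : Fin n → Trace AP P) (i k : ℕ) :
    (star α).Rel Pa i k ↔ ReflTransGen (fun a b => a ≤ b ∧ α.Rel Pa a b) i k := by
  constructor
  · rintro ⟨m, js, rfl, rfl, hjs⟩
    induction m with
    | zero => exact .refl
    | succ m ih =>
      refine .head (hjs 0) ?_
      simpa [Fin.tail] using ih (Fin.tail js) fun l => by simpa [Fin.tail] using hjs l.succ
  · intro h
    induction h using ReflTransGen.head_induction_on with
    | refl => exact ⟨0, fun _ => k, rfl, rfl, Fin.elim0⟩
    | head hab _ ih =>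
      obtain ⟨m, js, rfl, rfl, hjs⟩ := ih
      refine ⟨m + 1, Fin.cons _ js, rfl, by simp [← Fin.succ_last], fun l => ?_⟩
      cases l using Fin.cases with
      | zero => simpa using hab
      | succ l => simpa using hjs l

end Pg

end Formulas

theorem StrictMono.existsUnique_mem_Ico_succ {b : ℕ → ℕ} (hb : StrictMono b) (hb0 : b 0 = 0)
    (m : ℕ) : ∃! i, m ∈ Set.Ico (b i) (b (i + 1)) := by
  classical
  have hex : ∃ i, m < b (i + 1) := ⟨m, Nat.lt_of_lt_of_le (Nat.lt_succ_self m) (hb.id_le _)⟩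
  refine ⟨Nat.find hex, ⟨?_, Nat.find_spec hex⟩, fun i ⟨hi, hmi⟩ => ?_⟩
  · rcases h : Nat.find hex with _ | i
    · simp [hb0]
    · exact not_lt.mp (Nat.find_min hex (h ▸ Nat.lt_succ_self i))
  · refine le_antisymm (not_lt.mp fun hlt => ?_) (Nat.find_min' hex hmi)
    exact (Nat.find_spec hex).not_ge ((hb.monotone hlt).trans hi)

section Runs

variable {Q A : Type} (δ : Q → A → Set Q) (w : ℕ → A)

def RunSeg (S : Set Q) (p q : Q) (i k : ℕ) : Prop :=
  i ≤ k ∧ ∃ r : ℕ → Q, r i = p ∧ r k = q ∧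
    (∀ m, i ≤ m → m < k → r (m + 1) ∈ δ (r m) (w m)) ∧ ∀ m, i < m → m < k → r m ∈ S

variable {δ w} {S T : Set Q} {p q s : Q} {i j k : ℕ}

namespace RunSeg

theorem le (h : RunSeg δ w S p q i k) : i ≤ k := h.1

theorem refl : RunSeg δ w S p p i i :=
  ⟨le_rfl, fun _ => p, rfl, rfl, fun _ _ _ => by omega, fun _ _ _ => by omega⟩

theorem mono (h : RunSeg δ w S p q i k) (hST : S ⊆ T) : RunSeg δ w T p q i k := by
  obtain ⟨hik, r, hi, hk, hstep, hmem⟩ := h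
  exact ⟨hik, r, hi, hk, hstep, fun m h₁ h₂ => hST (hmem m h₁ h₂)⟩

theorem trans (h₁ : RunSeg δ w S p s i j) (h₂ : RunSeg δ w S s q j k) (hs : s ∈ S) :
    RunSeg δ w S p q i k := by
  obtain ⟨hij, r₁, h₁i, h₁j, step₁, mem₁⟩ := h₁
  obtain ⟨hjk, r₂, h₂j, h₂k, step₂, mem₂⟩ := h₂
  refine ⟨hij.trans hjk, fun m => if m < j then r₁ m else r₂ m, ?_, ?_, fun m h h' => ?_,
    fun m h h' => ?_⟩
  · rcases hij.lt_or_eq with hij | rfl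
    · simp [hij, h₁i]
    · simp [h₂j, ← h₁j, h₁i]
  · simp [not_lt.mpr hjk, h₂k]
  · by_cases hm : m + 1 < j
    · simpa only [if_pos hm, if_pos (Nat.lt_of_succ_lt hm)] using step₁ m h (by omega)
    by_cases hm' : m < j
    · have hj : m + 1 = j := by omega
      simp only [if_neg hm, if_pos hm']
      rw [hj, h₂j, ← h₁j, ← hj]
      exact step₁ m h (by omega)
    · simpa only [if_neg hm, if_neg hm'] using step₂ m (by omega) h'
  · rcases lt_trichotomy m j with hm | rfl | hm
    · simpa only [if_pos hm] using mem₁ m h hm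
    · simpa only [lt_irrefl, if_false, h₂j] using hs
    · simpa only [if_neg hm.not_gt] using mem₂ m hm h'

theorem empty_iff : RunSeg δ w ∅ p q i k ↔ k = i ∧ p = q ∨ k = i + 1 ∧ q ∈ δ p (w i) := by
  constructor
  · rintro ⟨hik, r, rfl, rfl, hstep, hmem⟩
    rcases hik.eq_or_lt with rfl | hik
    · exact .inl ⟨rfl, rfl⟩
    · have hk : k = i + 1 := by
        by_contra hk
        exact hmem (i + 1) (Nat.lt_succ_self i) (by omega)
      subst hk
      exact .inr ⟨rfl, hstep i le_rfl hik⟩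
  · rintro (⟨rfl, rfl⟩ | ⟨rfl, h⟩)
    · exact refl
    · refine ⟨Nat.le_succ i, fun m => if m ≤ i then p else q, by simp, by simp,
        fun m h₁ h₂ => ?_, fun m h₁ h₂ => by omega⟩
      obtain rfl : m = i := by omega
      simpa using h

theorem split_first_visit (h : RunSeg δ w (insert s S) p q i k) :
    RunSeg δ w S p q i k ∨
      ∃ j, i < j ∧ j < k ∧ RunSeg δ w S p s i j ∧ RunSeg δ w (insert s S) s q j k := by
  classical
  obtain ⟨hik, r, hi, hk, hstep, hmem⟩ := h
  by_cases hvisit : ∃ j, i < j ∧ j < k ∧ r j = s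
  · obtain ⟨hij, hjk, hrj⟩ := Nat.find_spec hvisit
    refine .inr ⟨Nat.find hvisit, hij, hjk,
      ⟨hij.le, r, hi, hrj, fun m h₁ h₂ => hstep m h₁ (by omega), fun m h₁ h₂ => ?_⟩,
      ⟨hjk.le, r, hrj, hk, fun m h₁ h₂ => hstep m (by omega) h₂,
        fun m h₁ h₂ => hmem m (by omega) h₂⟩⟩
    exact (Set.mem_insert_iff.mp (hmem m h₁ (by omega))).resolve_left
      fun hrm => Nat.find_min hvisit h₂ ⟨h₁, by omega, hrm⟩
  · push Not at hvisit
    exact .inl ⟨hik, r, hi, hk, hstep, fun m h₁ h₂ =>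
      (Set.mem_insert_iff.mp (hmem m h₁ h₂)).resolve_left (hvisit m h₁ h₂)⟩

theorem exists_reflTransGen_of_insert (h : RunSeg δ w (insert s S) s q i k) (hik : i < k) :
    ∃ j, ReflTransGen (fun a b => a < b ∧ RunSeg δ w S s s a b) i j ∧ j < k ∧
      RunSeg δ w S s q j k := by
  induction hd : k - i using Nat.strong_induction_on generalizing i with
  | _ d ih =>
    rcases h.split_first_visit with h | ⟨j, hij, hjk, h₁, h₂⟩
    · exact ⟨i, .refl, hik, h⟩
    · obtain ⟨j', hrt, hj'k, h₃⟩ := ih (k - j) (by omega) h₂ hjk rfl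
      exact ⟨j', .head ⟨hij, h₁⟩ hrt, hj'k, h₃⟩

theorem of_reflTransGen (h : ReflTransGen (fun a b => a < b ∧ RunSeg δ w S s s a b) i j) :
    RunSeg δ w (insert s S) s s i j := by
  induction h with
  | refl => exact refl
  | tail _ hbc ih => exact ih.trans (hbc.2.mono (Set.subset_insert _ _)) (Set.mem_insert _ _)

theorem shift_iff : RunSeg δ (fun m => w (j + m)) S p q i k ↔ RunSeg δ w S p q (j + i) (j + k) := by
  constructor
  · rintro ⟨hik, r, hi, hk, hstep, hmem⟩
    refine ⟨by omega, fun m => r (m - j), by simpa, by simpa, fun m h₁ h₂ => ?_,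
      fun m h₁ h₂ => hmem (m - j) (by omega) (by omega)⟩
    have := hstep (m - j) (by omega) (by omega)
    simp only [show m - j + 1 = m + 1 - j by omega, show j + (m - j) = m by omega] at this
    exact this
  · rintro ⟨hik, r, hi, hk, hstep, hmem⟩
    exact ⟨by omega, fun m => r (j + m), hi, hk, fun m h₁ h₂ => hstep (j + m) (by omega) (by omega),
      fun m h₁ h₂ => hmem (j + m) (by omega) (by omega)⟩

end RunSeg

theorem exists_run_of_runSeg {b : ℕ → ℕ} (hb : StrictMono b) (hb0 : b 0 = 0) {s : ℕ → Q}
    (hs : ∀ i, RunSeg δ w S (s i) (s (i + 1)) (b i) (b (i + 1))) :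
    ∃ r : ℕ → Q, (∀ i, r (b i) = s i) ∧ ∀ m, r (m + 1) ∈ δ (r m) (w m) := by
  choose _ ρ hρs hρe hρstep _ using hs
  choose c hc hc_unique using hb.existsUnique_mem_Ico_succ hb0
  refine ⟨fun m => ρ (c m) m, fun i => ?_, fun m => ?_⟩
  · show ρ (c (b i)) (b i) = s i
    rw [← hc_unique (b i) i ⟨le_rfl, hb (Nat.lt_succ_self i)⟩]
    exact hρs i
  · show ρ (c (m + 1)) (m + 1) ∈ δ (ρ (c m) m) (w m)
    obtain ⟨h₁, h₂⟩ := hc m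
    have hstep := hρstep (c m) m h₁ h₂
    rcases Nat.lt_or_ge (m + 1) (b (c m + 1)) with hlt | hge
    · rwa [← hc_unique (m + 1) (c m) ⟨by omega, hlt⟩]
    · have heq : m + 1 = b (c m + 1) := by omega
      rw [← hc_unique (m + 1) (c m + 1) ⟨heq.ge, by rw [heq]; exact hb (Nat.lt_succ_self _)⟩]
      rw [heq, hρs, ← hρe, ← heq]
      exact hstep

theorem NBA.mem_lang_iff_lasso {A : Type} (M : NBA A) (w : ℕ → A) :
    w ∈ M.Lang ↔ ∃ q ∈ M.F, ∃ t : ℕ → ℕ, StrictMono t ∧ 0 < t 0 ∧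
      RunSeg M.δ w Set.univ M.q0 q 0 (t 0) ∧ ∀ i, RunSeg M.δ w Set.univ q q (t i) (t (i + 1)) := by
  constructor
  · rintro ⟨r, hr0, hstep, hacc⟩
    have := M.fin
    have hrun : ∀ i k, i ≤ k → RunSeg M.δ w Set.univ (r i) (r k) i k := fun i k hik =>
      ⟨hik, r, rfl, rfl, fun m _ _ => hstep m, fun _ _ _ => trivial⟩
    have hfreq : ∃ᶠ m in atTop, ∃ q, q ∈ M.F ∧ r m = q :=
      frequently_atTop.mpr fun N => (hacc N).imp fun m ⟨hm, hF⟩ => ⟨hm, _, hF, rfl⟩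
    obtain ⟨q, hq⟩ := frequently_exists.mp hfreq
    obtain ⟨t, ht, hts⟩ :=
      extraction_of_frequently_atTop ((eventually_gt_atTop 0).and_frequently hq)
    refine ⟨q, (hts 0).2.1, t, ht, (hts 0).1, ?_, fun i => ?_⟩
    · simpa only [hr0, (hts 0).2.2] using hrun 0 (t 0) (Nat.zero_le _)
    · simpa only [(hts i).2.2, (hts (i + 1)).2.2] using hrun _ _ (ht (Nat.lt_succ_self i)).le
  · rintro ⟨q, hqF, t, ht, ht0, hpre, hloop⟩
    let b : ℕ → ℕ := fun | 0 => 0 | i + 1 => t i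
    let s : ℕ → M.Q := fun | 0 => M.q0 | _ + 1 => q
    have hb : StrictMono b := strictMono_nat_of_lt_succ fun
      | 0 => ht0
      | i + 1 => ht (Nat.lt_succ_self i)
    obtain ⟨r, hrs, hstep⟩ := exists_run_of_runSeg (s := s) hb rfl fun
      | 0 => hpre
      | i + 1 => hloop i
    exact ⟨r, hrs 0, hstep, fun N => ⟨b (N + 1), (Nat.le_succ N).trans (hb.id_le _),
      (hrs (N + 1)).symm ▸ hqF⟩⟩

end Runs

section Programs

variable {AP P : Type} {n : ℕ}

namespace Pg

/-- McNaughton–Yamada: a run through `s :: l` either avoids `s`, or goes to `s`, loops at `s`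
and leaves `s` for good. -/
def kleene {Q : Type} (step : Q → Q → Pg AP P n) : List Q → Q → Q → Pg AP P n
  | [], p, q => step p q
  | s :: l, p, q =>
    .sum (kleene step l p q) (.seq (kleene step l p s) (.seq (.star (kleene step l s s))
      (kleene step l s q)))

theorem rel_kleene {Q A : Type} {δ : Q → A → Set Q} {w : ℕ → A} {step : Q → Q → Pg AP P n}
    {Pa : Fin n → Trace AP P} (hstep : ∀ p q i k, (step p q).Rel Pa i k ↔ k = i + 1 ∧ q ∈ δ p (w i))
    (l : List Q) (p q : Q) (i k : ℕ) :
    (kleene step l p q).Rel Pa i k ↔ i < k ∧ RunSeg δ w {x | x ∈ l} p q i k := by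
  induction l generalizing p q i k with
  | nil =>
    simp only [kleene, hstep, List.not_mem_nil, Set.ofPred_false, RunSeg.empty_iff]
    constructor
    · rintro ⟨rfl, h⟩
      exact ⟨Nat.lt_succ_self i, .inr ⟨rfl, h⟩⟩
    · rintro ⟨hik, ⟨rfl, -⟩ | h⟩
      · exact absurd hik (lt_irrefl _)
      · exact h
  | cons s l ih =>
    have hS : {x | x ∈ s :: l} = insert s {x | x ∈ l} := by ext; simp
    have hloop : ∀ a b, (star (kleene step l s s)).Rel Pa a b ↔
        ReflTransGen (fun a b => a < b ∧ RunSeg δ w {x | x ∈ l} s s a b) a b := by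
      intro a b
      rw [rel_star_iff]
      congr! 1
      ext a b
      rw [ih]
      exact ⟨fun h => h.2, fun h => ⟨h.1.le, h⟩⟩
    simp only [kleene, Rel.eq_3, Rel.eq_4, hloop, ih, hS]
    constructor
    · rintro (h | ⟨j, -, -, ⟨hij, h₁⟩, j', -, -, hrt, hj'k, h₃⟩)
      · exact ⟨h.1, h.2.mono (Set.subset_insert _ _)⟩
      · have h₂ := RunSeg.of_reflTransGen hrt
        exact ⟨by have := h₂.le; omega, ((h₁.mono (Set.subset_insert _ _)).trans h₂
          (Set.mem_insert _ _)).trans (h₃.mono (Set.subset_insert _ _)) (Set.mem_insert _ _)⟩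
    · rintro ⟨hik, h⟩
      rcases h.split_first_visit with h | ⟨j, hij, hjk, h₁, h₂⟩
      · exact .inl ⟨hik, h⟩
      · obtain ⟨j', hrt, hj'k, h₃⟩ := h₂.exists_reflTransGen_of_insert hjk
        exact .inr ⟨j, hij.le, hjk.le, ⟨hij, h₁⟩, j', (RunSeg.of_reflTransGen hrt).le,
          hj'k.le, hrt, hj'k, h₃⟩

end Pg

theorem QF.sat_dia_delta_iff {α β : Pg AP P n} {Pa : Fin n → Trace AP P} {R₀ : ℕ → Prop}
    {R : ℕ → ℕ → Prop} (hα : ∀ k, α.Rel Pa 0 k ↔ 0 < k ∧ R₀ k)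
    (hβ : ∀ j a b, β.Rel (TAdrop Pa j) a b ↔ a < b ∧ R (j + a) (j + b)) :
    (dia α (delta β)).Sat Pa ↔
      ∃ t : ℕ → ℕ, StrictMono t ∧ 0 < t 0 ∧ R₀ (t 0) ∧ ∀ i, R (t i) (t (i + 1)) := by
  simp only [Sat, hα, hβ]
  constructor
  · rintro ⟨j, ⟨hj, hR₀⟩, k, hk0, -, hk⟩
    refine ⟨fun i => j + k i, strictMono_nat_of_lt_succ fun i => by simpa using (hk i).1,
      by simpa [hk0], by simpa [hk0], fun i => (hk i).2⟩
  · rintro ⟨t, ht, ht0, hR₀, hR⟩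
    have hle : ∀ i, t 0 ≤ t i := fun i => ht.monotone (Nat.zero_le i)
    refine ⟨t 0, ⟨ht0, hR₀⟩, fun i => t i - t 0, Nat.sub_self _, fun i => by
      have := ht (Nat.lt_add_one i); dsimp only; omega, fun i => ⟨?_, ?_⟩⟩
    · have := ht (Nat.lt_add_one i); have := hle i; dsimp only; omega
    · simpa only [Nat.add_sub_cancel' (hle _)] using hR i

namespace NBA

variable [Fintype AP] [Fintype P] (M : NBA (Letter AP P n))

open Classical in
noncomputable def stepPg (p q : M.Q) : Pg AP P n :=
  Pg.letterIn (Finset.univ.filter fun x => q ∈ M.δ p x)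

noncomputable def pathPg (p q : M.Q) : Pg AP P n :=
  letI := M.fin
  Pg.kleene M.stepPg Finset.univ.toList p q

open Classical in
noncomputable def toQF : QF AP P n :=
  letI := M.fin
  QF.disj ((Finset.univ.filter (· ∈ M.F)).toList.map fun q =>
    .dia (M.pathPg M.q0 q) (.delta (M.pathPg q q)))

theorem rel_pathPg (Pa : Fin n → Trace AP P) (p q : M.Q) (i k : ℕ) :
    (M.pathPg p q).Rel Pa i k ↔ i < k ∧ RunSeg M.δ (nuAP Pa) Set.univ p q i k := by
  have hstep : ∀ p q i k, (M.stepPg p q).Rel Pa i k ↔ k = i + 1 ∧ q ∈ M.δ p (nuAP Pa i) := by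
    intro p q i k
    simp [stepPg, Pg.rel_letterIn]
  simp [pathPg, Pg.rel_kleene hstep]

theorem sat_lasso_iff (Pa : Fin n → Trace AP P) (p q : M.Q) :
    (QF.dia (M.pathPg p q) (.delta (M.pathPg q q))).Sat Pa ↔
      ∃ t : ℕ → ℕ, StrictMono t ∧ 0 < t 0 ∧ RunSeg M.δ (nuAP Pa) Set.univ p q 0 (t 0) ∧
        ∀ i, RunSeg M.δ (nuAP Pa) Set.univ q q (t i) (t (i + 1)) :=
  QF.sat_dia_delta_iff (M.rel_pathPg Pa p q 0)
    fun _ a b => (M.rel_pathPg _ q q a b).trans (and_congr_right' (RunSeg.shift_iff (w := nuAP Pa)))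

theorem sat_toQF (Pa : Fin n → Trace AP P) : M.toQF.Sat Pa ↔ nuAP Pa ∈ M.Lang := by
  simp only [toQF, QF.sat_disj, List.mem_map, Finset.mem_toList, Finset.mem_filter,
    Finset.mem_univ, true_and, exists_exists_and_eq_and, sat_lasso_iff, mem_lang_iff_lasso]

end NBA

end Programs

/-- **HyperPDL-Δ expresses all ω-regular properties over trace assignments**: for every
ω-regular language `L` over `(2^{AP})ⁿ × Σⁿ` there is a quantifier-free HyperPDL-Δ
formula `φ` with path variables `π₁, …, π_n` such that for every trace assignment `Π`,
`Π ⊨ φ` iff `ν_{AP}(Π) ∈ L`. -/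
theorem omega_regular_expressible {AP P : Type} [Fintype AP] [Fintype P] {n : ℕ}
    (L : Set (ℕ → (Fin n → Set AP) × (Fin n → P)))
    (h : ∃ M : NBA ((Fin n → Set AP) × (Fin n → P)), M.Lang = L) :
    ∃ φ : QF AP P n, ∀ Pa : Fin n → Trace AP P, φ.Sat Pa ↔ nuAP Pa ∈ L := by
  obtain ⟨M, rfl⟩ := h
  exact ⟨M.toQF, M.sat_toQF⟩
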